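/- For any finite set F of n points in the unit square [0,1]^2, the shortest Hamiltonian path through F has length at most c·√n for a universal constant c (one may take c = 2√2 or any valid constant). -/

import Mathlib

open Metric Set MeasureTheory Filter
open scoped Classical ENNReal BigOperators

noncomputable section

/-- Length of the polygonal path visiting the points of the list in order,
for a (pseudo-)distance function `D`. -/
def pathLen {E : Type*} (D : E → E → ℝ) : List E → ℝ
  | [] => 0
  | [_] => 0
  | a :: b :: l => D a b + pathLen D (b :: l)

/-- Length of a shortest Hamiltonian path through a finite set of points,
for the (pseudo-)distance `D`. -/
def tspWith {E : Type*} (D : E → E → ℝ) (F : Finset E) : ℝ :=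
  sInf {L : ℝ | ∃ l : List E, l.Nodup ∧ l.toFinset = F ∧ pathLen D l = L}

/-- The points of `F` lying in the region `R`. -/
def restr {E : Type*} (F : Finset E) (R : Set E) : Finset E :=
  F.filter (fun x => x ∈ R)

/-- Euclidean TSP length `T(F, R)`: shortest Hamiltonian path through `F ∩ R`. -/
def tsp {E : Type*} [PseudoMetricSpace E] (F : Finset E) (R : Set E) : ℝ :=
  tspWith dist (restr F R)

/-- The boundary pseudo-metric of a region `R`: the Euclidean metric, quotiented so
that travel along the boundary `∂R` is free. -/
def bMetric {E : Type*} [PseudoMetricSpace E] (R : Set E) (a b : E) : ℝ :=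
  min (dist a b) (Metric.infDist a (frontier R) + Metric.infDist b (frontier R))

/-- Boundary TSP length `T_B(F, R)`: shortest Hamiltonian tour on `F ∩ R` for the
boundary pseudo-metric of `R`. -/
def btsp {E : Type*} [PseudoMetricSpace E] (F : Finset E) (R : Set E) : ℝ :=
  tspWith (bMetric R) (restr F R)

/-- The unit hypercube `[0,1]^d`. -/
def unitCube (d : ℕ) : Set (EuclideanSpace ℝ (Fin d)) :=
  {x | ∀ i, x i ∈ Set.Icc (0 : ℝ) 1}

/-- The closed subcube of edge length `1/m` indexed by `k` in the partition of `[0,1]^d`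
into `m^d` congruent subcubes. -/
def subcube (d m : ℕ) (k : Fin d → Fin m) : Set (EuclideanSpace ℝ (Fin d)) :=
  {x | ∀ i, x i ∈ Set.Icc ((k i : ℝ) / m) (((k i : ℝ) + 1) / m)}

/-- The half-open subcube of edge length `1/m` indexed by `k`. -/
def subcubeIco (d m : ℕ) (k : Fin d → Fin m) : Set (EuclideanSpace ℝ (Fin d)) :=
  {x | ∀ i, x i ∈ Set.Ico ((k i : ℝ) / m) (((k i : ℝ) + 1) / m)}


/-!
Cut the square into `m ≈ √n` horizontal strips of height `1/m` and visit the points strip by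
strip, bottom to top, each strip from left to right. Every step of this path costs at most the
increase of the potential `(2 + 1/m) · strip + x` plus `1/m`: within a strip the vertical move is
at most `1/m`, and a move up `k ≥ 1` strips costs at most `1 + (k + 1)/m`, which the jump
`(2 + 1/m) k - 1` of the potential absorbs. The potential ranges over `[0, 2m]`, so the path has
length at most `2m + n/m = O(√n)`.
-/

theorem EuclideanSpace.dist_le_sum_dist {𝕜 ι : Type*} [RCLike 𝕜] [Fintype ι]
    (x y : EuclideanSpace 𝕜 ι) : dist x y ≤ ∑ i, dist (x i) (y i) := by
  rw [EuclideanSpace.dist_eq, Real.sqrt_le_left (by positivity)]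
  exact Finset.sum_sq_le_sq_sum_of_nonneg fun _ _ => dist_nonneg

theorem Finset.exists_perm_toList_pairwise_le_comp {α β : Type*} [LinearOrder β]
    (F : Finset α) (f : α → β) : ∃ l : List α, l.Perm F.toList ∧ l.Pairwise (f · ≤ f ·) := by
  refine ⟨_, List.mergeSort_perm F.toList (fun a b => decide (f a ≤ f b)), ?_⟩
  refine (List.pairwise_mergeSort (fun a b c hab hbc => ?_) (fun a b => ?_) _).imp
    (of_decide_eq_true ·)
  · simp only [decide_eq_true_eq] at *
    exact hab.trans hbc
  · simpa using le_total (f a) (f b)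

section PathLength

variable {E : Type*} {D : E → E → ℝ}

theorem pathLen_nonneg (hD : ∀ a b, 0 ≤ D a b) : ∀ l : List E, 0 ≤ pathLen D l
  | [] => le_rfl
  | [_] => le_rfl
  | a :: b :: l => add_nonneg (hD a b) (pathLen_nonneg hD (b :: l))

theorem tspWith_toFinset_le_pathLen [DecidableEq E] (hD : ∀ a b, 0 ≤ D a b) {l : List E}
    (hl : l.Nodup) : tspWith D l.toFinset ≤ pathLen D l :=
  csInf_le ⟨0, by rintro _ ⟨l', -, -, rfl⟩; exact pathLen_nonneg hD l'⟩
    ⟨l, hl, by convert rfl, rfl⟩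

theorem pathLen_le_of_isChain {R : E → E → Prop} {φ : E → ℝ} {w : ℝ}
    (hD : ∀ a b, R a b → D a b ≤ φ b - φ a + w) :
    ∀ (a : E) (l : List E), (a :: l).IsChain R →
      pathLen D (a :: l) ≤ φ ((a :: l).getLast (List.cons_ne_nil a l)) - φ a + w * l.length
  | a, [], _ => by simp [pathLen]
  | a, b :: l, h => by
    rw [List.isChain_cons_cons] at h
    have := pathLen_le_of_isChain hD b l h.2
    have := hD a b h.1
    rw [List.getLast_cons_cons, List.length_cons, Nat.cast_succ]
    simp only [pathLen]
    linarith

end PathLength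

namespace UnitSquare

/-- Index `k < m` of a strip `[k/m, (k+1)/m]` containing `y ∈ [0,1]`; clamped so that `y = 1`
falls in the top strip. -/
def stripIndex (m : ℕ) (y : ℝ) : ℕ := min ⌊y * m⌋₊ (m - 1)

variable {m : ℕ}

theorem stripIndex_lt (hm : 0 < m) (y : ℝ) : stripIndex m y < m :=
  (min_le_right _ _).trans_lt (Nat.pred_lt hm.ne')

theorem stripIndex_div_le {y : ℝ} (hy : 0 ≤ y) : (stripIndex m y : ℝ) / m ≤ y := by
  rcases m.eq_zero_or_pos with rfl | hm
  · simpa using hy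
  rw [div_le_iff₀ (by exact_mod_cast hm)]
  calc (stripIndex m y : ℝ) ≤ ⌊y * m⌋₊ := by exact_mod_cast min_le_left _ _
    _ ≤ y * m := Nat.floor_le (by positivity)

theorem le_stripIndex_add_one_div (hm : 0 < m) {y : ℝ} (hy : y ≤ 1) :
    y ≤ ((stripIndex m y : ℝ) + 1) / m := by
  rw [le_div_iff₀ (by exact_mod_cast hm)]
  rcases le_total ⌊y * m⌋₊ (m - 1) with h | h
  · rw [stripIndex, min_eq_left h]
    exact (Nat.lt_floor_add_one _).le
  · rw [stripIndex, min_eq_right h, Nat.cast_pred hm, sub_add_cancel]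
    nlinarith

theorem abs_sub_le_stripIndex (hm : 0 < m) {y y' : ℝ} (hy : y ∈ Icc 0 1) (hy' : y' ∈ Icc 0 1) :
    |y - y'| ≤ (|(stripIndex m y : ℝ) - stripIndex m y'| + 1) / m := by
  have hup := le_stripIndex_add_one_div hm hy.2
  have hup' := le_stripIndex_add_one_div hm hy'.2
  have hlo := stripIndex_div_le (m := m) hy.1
  have hlo' := stripIndex_div_le (m := m) hy'.1
  set d := (stripIndex m y : ℝ) - stripIndex m y'
  have hd : d / m ≤ |d| / m := by gcongr; exact le_abs_self d
  have hd' : -d / m ≤ |d| / m := by gcongr; exact neg_le_abs d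
  rw [add_div] at hup hup' ⊢
  rw [abs_sub_le_iff]
  constructor
  · rw [sub_div] at hd
    linarith
  · rw [neg_sub, sub_div] at hd'
    linarith

def sweepPotential (m : ℕ) (p : EuclideanSpace ℝ (Fin 2)) : ℝ :=
  (2 + 1 / m) * stripIndex m (p 1) + p 0

theorem sweepPotential_mem_Icc (hm : 0 < m) {p : EuclideanSpace ℝ (Fin 2)} (hp : p ∈ unitCube 2) :
    sweepPotential m p ∈ Icc 0 (2 * m : ℝ) := by
  have hs : (stripIndex m (p 1) : ℝ) + 1 ≤ m := by exact_mod_cast stripIndex_lt hm (p 1)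
  have hm' : (0 : ℝ) < m := by exact_mod_cast hm
  have hx := hp 0
  constructor
  · have := hx.1
    unfold sweepPotential
    positivity
  · calc sweepPotential m p ≤ (2 + 1 / m) * (m - 1) + 1 := by
          unfold sweepPotential; gcongr <;> linarith [hx.2]
      _ = 2 * m - 1 / m := by field_simp; ring
      _ ≤ 2 * m := by linarith [one_div_pos.mpr hm']

theorem dist_le_sweepPotential_sub (hm : 0 < m) {a b : EuclideanSpace ℝ (Fin 2)}
    (ha : a ∈ unitCube 2) (hb : b ∈ unitCube 2) (hab : sweepPotential m a ≤ sweepPotential m b) :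
    dist a b ≤ sweepPotential m b - sweepPotential m a + 1 / m := by
  have hdist := EuclideanSpace.dist_le_sum_dist a b
  rw [Fin.sum_univ_two, Real.dist_eq, Real.dist_eq] at hdist
  have hy := abs_sub_le_stripIndex hm (ha 1) (hb 1)
  have hm' : (0 : ℝ) < m := by exact_mod_cast hm
  set sa := stripIndex m (a 1)
  set sb := stripIndex m (b 1)
  have hφ : sweepPotential m b - sweepPotential m a
      = 2 * ((sb : ℝ) - sa) + (b 0 - a 0) + ((sb : ℝ) - sa) / m := by
    unfold sweepPotential; field_simp; ring
  rw [← sub_nonneg, hφ] at hab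
  rw [hφ, add_assoc _ (((sb : ℝ) - sa) / m), ← add_div]
  obtain ⟨hxa, hxa'⟩ := ha 0
  obtain ⟨hxb, hxb'⟩ := hb 0
  rcases lt_trichotomy sa sb with h | h | h
  · have h : (sa : ℝ) + 1 ≤ sb := by exact_mod_cast h
    rw [abs_sub_comm (sa : ℝ), abs_of_pos (a := (sb : ℝ) - sa) (by linarith)] at hy
    have := abs_sub_le_iff.2 (⟨by linarith, by linarith⟩ : a 0 - b 0 ≤ 1 ∧ b 0 - a 0 ≤ 1)
    linarith
  · simp only [h, sub_self, abs_zero, zero_add, mul_zero, zero_div, add_zero] at hy hab ⊢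
    rw [abs_sub_comm, abs_of_nonneg hab] at hdist
    linarith
  · -- a lower strip would lower the potential by at least `2 + 1/m - 1`
    have h : (sb : ℝ) + 1 ≤ sa := by exact_mod_cast h
    have : ((sb : ℝ) - sa) / m ≤ 0 := div_nonpos_of_nonpos_of_nonneg (by linarith) hm'.le
    linarith

end UnitSquare

theorem tsp_unitCube_two_le {m : ℕ} (hm : 0 < m) {F : Finset (EuclideanSpace ℝ (Fin 2))}
    (hF : ∀ x ∈ F, x ∈ unitCube 2) (hne : F.Nonempty) :
    tsp F (unitCube 2) ≤ 2 * m + F.card / m := by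
  obtain ⟨l, hperm, hsorted⟩ :=
    F.exists_perm_toList_pairwise_le_comp (UnitSquare.sweepPotential m)
  have hnodup : l.Nodup := hperm.nodup_iff.2 F.nodup_toList
  have hl : l.toFinset = F := by rw [List.toFinset_eq_of_perm _ _ hperm, Finset.toList_toFinset]
  have hcard : F.card = l.length := by rw [hperm.length_eq, Finset.length_toList]
  subst hl
  obtain ⟨a, l, rfl⟩ := List.exists_cons_of_ne_nil (l := l) (by rintro rfl; simp at hne)
  have hmem : ∀ x ∈ a :: l, x ∈ unitCube 2 := fun x hx => hF x (List.mem_toFinset.2 hx)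
  have hchain : (a :: l).IsChain fun p q => p ∈ unitCube 2 ∧ q ∈ unitCube 2 ∧
      UnitSquare.sweepPotential m p ≤ UnitSquare.sweepPotential m q :=
    (List.Pairwise.and_mem.1 hsorted).isChain.imp fun p q h => ⟨hmem p h.1, hmem q h.2.1, h.2.2⟩
  have hlast := UnitSquare.sweepPotential_mem_Icc hm
    (hmem _ (List.getLast_mem (List.cons_ne_nil a l)))
  have hfirst := UnitSquare.sweepPotential_mem_Icc hm (hmem a List.mem_cons_self)
  have hpath := pathLen_le_of_isChain (D := dist) (w := 1 / m)
    (fun p q h => UnitSquare.dist_le_sweepPotential_sub hm h.1 h.2.1 h.2.2) a l hchain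
  have htsp := tspWith_toFinset_le_pathLen (D := dist) (fun _ _ => dist_nonneg) hnodup
  rw [tsp, restr, Finset.filter_true_of_mem hF, hcard, List.length_cons, Nat.cast_succ]
  rw [one_div_mul_eq_div] at hpath
  have hlen : (l.length : ℝ) / m ≤ (l.length + 1) / m := by gcongr; linarith
  linarith [hlast.2, hfirst.1]

theorem two_mul_sqrt_succ_add_div_le {n : ℕ} (hn : 0 < n) :
    2 * ((n.sqrt + 1 : ℕ) : ℝ) + n / (n.sqrt + 1 : ℕ) ≤ 5 * √n := by
  have hs : (n.sqrt : ℝ) ≤ √n := Real.nat_sqrt_le_real_sqrt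
  have hs' : √n < n.sqrt + 1 := Real.real_sqrt_lt_nat_sqrt_succ
  have h1 : 1 ≤ √n := Real.one_le_sqrt.2 (by exact_mod_cast hn)
  have hdiv : (n : ℝ) / (n.sqrt + 1 : ℕ) ≤ √n := by
    rw [div_le_iff₀ (by positivity)]
    push_cast
    nlinarith [Real.mul_self_sqrt (Nat.cast_nonneg n), Real.sqrt_nonneg n]
  push_cast at hdiv ⊢
  linarith

/-- the shortest Hamiltonian path through any `n` points of the unit
square has length at most `c √n` for a universal constant `c`. -/
theorem tsp_le_sqrt_card :
    ∃ c : ℝ, 0 < c ∧ ∀ F : Finset (EuclideanSpace ℝ (Fin 2)),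
      (∀ x ∈ F, x ∈ unitCube 2) →
      tsp F (unitCube 2) ≤ c * Real.sqrt (F.card : ℝ) := by
  refine ⟨5, by norm_num, fun F hF => ?_⟩
  rcases F.eq_empty_or_nonempty with rfl | hne
  · simpa [tsp, restr, pathLen] using
      tspWith_toFinset_le_pathLen (D := dist) (fun _ _ => dist_nonneg) List.nodup_nil
  · calc tsp F (unitCube 2)
        ≤ 2 * ((F.card.sqrt + 1 : ℕ) : ℝ) + F.card / (F.card.sqrt + 1 : ℕ) :=
          tsp_unitCube_two_le F.card.sqrt.succ_pos hF hne
      _ ≤ 5 * √F.card := two_mul_sqrt_succ_add_div_le hne.card_pos
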